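/- For positive reals λ₁, λ₂, λ₃, real parameters μ_p, α_p ≠ 0 (p = 1..N), λ̃_c = (λ₁λ₂λ₃)^{-1/3} λ_c, and S_a = λₐ⁻² Σ_p μ_p (λ̃ₐ^{α_p} - (1/3) Σ_c λ̃_c^{α_p}), the diagonal derivative satisfies (1/λₐ) ∂S_a/∂λₐ = λₐ⁻⁴ Σ_p μ_p α_p ( (1/3 - 2/α_p) λ̃ₐ^{α_p} + (1/9 + 2/(3α_p)) Σ_c λ̃_c^{α_p} ). -/

import Mathlib

lemma rpowA (x p q c : ℝ) (hx : 0 < x) (hp : 0 < p) (hq : 0 < q) :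
    ((x * p * q) ^ (-(1:ℝ)/3) * x) ^ c = x ^ (2/3 * c) * (p * q) ^ (-(1:ℝ)/3 * c) := by
  rw [mul_assoc, Real.mul_rpow hx.le (by positivity),
    show x ^ (-(1:ℝ)/3) * (p * q) ^ (-(1:ℝ)/3) * x = x ^ ((2:ℝ)/3) * (p * q) ^ (-(1:ℝ)/3) from by
      rw [mul_right_comm, ← Real.rpow_add_one hx.ne']; norm_num,
    Real.mul_rpow (by positivity) (by positivity), ← Real.rpow_mul hx.le,
    ← Real.rpow_mul (by positivity)]

lemma rpowB (x p q r c : ℝ) (hx : 0 < x) (hp : 0 < p) (hq : 0 < q) (hr : 0 ≤ r) :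
    ((x * p * q) ^ (-(1:ℝ)/3) * r) ^ c
      = x ^ (-(1:ℝ)/3 * c) * (p * q) ^ (-(1:ℝ)/3 * c) * r ^ c := by
  rw [mul_assoc, Real.mul_rpow hx.le (by positivity),
    Real.mul_rpow (by positivity) hr,
    Real.mul_rpow (by positivity) (by positivity), ← Real.rpow_mul hx.le,
    ← Real.rpow_mul (by positivity)]

lemma ogden_helper {N : ℕ} (μ α : Fin N → ℝ) (hα : ∀ i, α i ≠ 0) (l p q : ℝ)
    (hl : 0 < l) (hp : 0 < p) (hq : 0 < q) :
    HasDerivAt (fun x : ℝ => x ^ (-(2:ℝ)) * ∑ i, μ i *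
      (((x * p * q) ^ (-(1:ℝ)/3) * x) ^ α i -
        (1/3) * (((x * p * q) ^ (-(1:ℝ)/3) * x) ^ α i
          + ((x * p * q) ^ (-(1:ℝ)/3) * p) ^ α i
          + ((x * p * q) ^ (-(1:ℝ)/3) * q) ^ α i)))
      (l * (l ^ (-(4:ℝ)) * ∑ i, μ i * α i *
        ((1/3 - 2 / α i) * ((l * p * q) ^ (-(1:ℝ)/3) * l) ^ α i
          + (1/9 + 2 / (3 * α i)) * (((l * p * q) ^ (-(1:ℝ)/3) * l) ^ α i
            + ((l * p * q) ^ (-(1:ℝ)/3) * p) ^ α i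
            + ((l * p * q) ^ (-(1:ℝ)/3) * q) ^ α i)))) l := by
  have hgi : ∀ i : Fin N, HasDerivAt
      (fun x : ℝ => μ i * ((p*q) ^ (-(1:ℝ)/3 * α i) *
        ((2/3) * x ^ (2/3 * α i - 2)
          - 1/3 * (p ^ α i + q ^ α i) * x ^ (-(1:ℝ)/3 * α i - 2))))
      (μ i * ((p*q) ^ (-(1:ℝ)/3 * α i) *
        ((2/3) * ((2/3 * α i - 2) * l ^ (2/3 * α i - 2 - 1))
          - 1/3 * (p ^ α i + q ^ α i) * ((-(1:ℝ)/3 * α i - 2) * l ^ (-(1:ℝ)/3 * α i - 2 - 1))))) l := by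
    intro i
    exact ((((Real.hasDerivAt_rpow_const (p := 2/3 * α i - 2) (Or.inl hl.ne')).const_mul
      (2/3)).sub ((Real.hasDerivAt_rpow_const (p := -(1:ℝ)/3 * α i - 2)
        (Or.inl hl.ne')).const_mul (1/3 * (p ^ α i + q ^ α i)))).const_mul
        ((p*q) ^ (-(1:ℝ)/3 * α i))).const_mul (μ i)
  have hg := HasDerivAt.fun_sum (fun i (_ : i ∈ Finset.univ) => hgi i)
  have heq : (fun x : ℝ => x ^ (-(2:ℝ)) * ∑ i, μ i *
      (((x * p * q) ^ (-(1:ℝ)/3) * x) ^ α i -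
        (1/3) * (((x * p * q) ^ (-(1:ℝ)/3) * x) ^ α i
          + ((x * p * q) ^ (-(1:ℝ)/3) * p) ^ α i
          + ((x * p * q) ^ (-(1:ℝ)/3) * q) ^ α i)))
      =ᶠ[nhds l] (fun x : ℝ => ∑ i, μ i * ((p*q) ^ (-(1:ℝ)/3 * α i) *
        ((2/3) * x ^ (2/3 * α i - 2)
          - 1/3 * (p ^ α i + q ^ α i) * x ^ (-(1:ℝ)/3 * α i - 2)))) := by
    filter_upwards [eventually_gt_nhds hl] with x hx
    rw [Finset.mul_sum]
    refine Finset.sum_congr rfl fun i _ => ?_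
    rw [rpowA x p q (α i) hx hp hq, rpowB x p q p (α i) hx hp hq hp.le,
      rpowB x p q q (α i) hx hp hq hq.le,
      show x ^ (2/3 * α i - 2) = x ^ (-(2:ℝ)) * x ^ (2/3 * α i) from by
        rw [← Real.rpow_add hx]; congr 1; ring,
      show x ^ (-(1:ℝ)/3 * α i - 2) = x ^ (-(2:ℝ)) * x ^ (-(1:ℝ)/3 * α i) from by
        rw [← Real.rpow_add hx]; congr 1; ring]
    ring
  have hfinal := hg.congr_of_eventuallyEq heq
  refine hfinal.congr_deriv (Eq.symm ?_)
  rw [Finset.mul_sum, Finset.mul_sum]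
  refine Finset.sum_congr rfl fun i _ => ?_
  rw [rpowA l p q (α i) hl hp hq, rpowB l p q p (α i) hl hp hq hp.le,
    rpowB l p q q (α i) hl hp hq hq.le,
    show l ^ (2/3 * α i - 2 - 1) = (l * l ^ (-(4:ℝ))) * l ^ (2/3 * α i) from by
      rw [show l * l ^ (-(4:ℝ)) = l ^ (-(3:ℝ)) from by
          rw [show (-(3:ℝ)) = 1 + -4 by norm_num, Real.rpow_add hl, Real.rpow_one],
        ← Real.rpow_add hl]; congr 1; ring,
    show l ^ (-(1:ℝ)/3 * α i - 2 - 1) = (l * l ^ (-(4:ℝ))) * l ^ (-(1:ℝ)/3 * α i) from by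
      rw [show l * l ^ (-(4:ℝ)) = l ^ (-(3:ℝ)) from by
          rw [show (-(3:ℝ)) = 1 + -4 by norm_num, Real.rpow_add hl, Real.rpow_one],
        ← Real.rpow_add hl]; congr 1; ring]
  have hαi := hα i
  field_simp
  ring

/-- Diagonal component of the corrected elasticity tensor for the Ogden model:
`(1/λₐ) ∂S_a/∂λₐ = λₐ⁻⁴ Σ_p μ_p α_p ((1/3 - 2/α_p) λ̃ₐ^{α_p}
+ (1/9 + 2/(3 α_p)) Σ_c λ̃_c^{α_p})`. -/
theorem ogden_elasticity_tensor_diag {N : ℕ}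
    (μ α : Fin N → ℝ) (hα : ∀ p, α p ≠ 0)
    (lam : Fin 3 → ℝ) (hlam : ∀ c, 0 < lam c)
    (a : Fin 3)
    (S : (Fin 3 → ℝ) → ℝ)
    (hS : ∀ l : Fin 3 → ℝ, S l =
      (l a) ^ (-(2:ℝ)) * ∑ p, μ p *
        (((l 0 * l 1 * l 2) ^ (-(1:ℝ)/3) * l a) ^ (α p)
          - (1/3) * ∑ c, ((l 0 * l 1 * l 2) ^ (-(1:ℝ)/3) * l c) ^ (α p)))
    (lt : Fin 3 → ℝ) (hlt : ∀ c, lt c = (lam 0 * lam 1 * lam 2) ^ (-(1:ℝ)/3) * lam c) :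
    HasDerivAt (fun x : ℝ => S (Function.update lam a x))
      (lam a * ((lam a) ^ (-(4:ℝ)) *
        ∑ p, μ p * α p *
          ((1/3 - 2 / α p) * lt a ^ (α p)
            + (1/9 + 2 / (3 * α p)) * ∑ c, lt c ^ (α p))))
      (lam a) := by
  fin_cases a
  · simp only [Fin.zero_eta, Fin.isValue]
    have key := ogden_helper μ α hα (lam 0) (lam 1) (lam 2) (hlam 0) (hlam 1) (hlam 2)
    have hfun : (fun x : ℝ => S (Function.update lam 0 x))
        = (fun x : ℝ => x ^ (-(2:ℝ)) * ∑ i, μ i *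
          (((x * lam 1 * lam 2) ^ (-(1:ℝ)/3) * x) ^ α i -
            (1/3) * (((x * lam 1 * lam 2) ^ (-(1:ℝ)/3) * x) ^ α i
              + ((x * lam 1 * lam 2) ^ (-(1:ℝ)/3) * lam 1) ^ α i
              + ((x * lam 1 * lam 2) ^ (-(1:ℝ)/3) * lam 2) ^ α i))) := by
      funext x
      rw [hS]
      simp [Fin.sum_univ_three, Function.update]
    rw [hfun]
    simp only [Fin.sum_univ_three, hlt]
    exact key
  · simp only [Fin.mk_one, Fin.isValue]
    have key := ogden_helper μ α hα (lam 1) (lam 0) (lam 2) (hlam 1) (hlam 0) (hlam 2)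
    have hfun : (fun x : ℝ => S (Function.update lam 1 x))
        = (fun x : ℝ => x ^ (-(2:ℝ)) * ∑ i, μ i *
          (((x * lam 0 * lam 2) ^ (-(1:ℝ)/3) * x) ^ α i -
            (1/3) * (((x * lam 0 * lam 2) ^ (-(1:ℝ)/3) * x) ^ α i
              + ((x * lam 0 * lam 2) ^ (-(1:ℝ)/3) * lam 0) ^ α i
              + ((x * lam 0 * lam 2) ^ (-(1:ℝ)/3) * lam 2) ^ α i))) := by
      funext x
      rw [hS]
      have h0 : Function.update lam 1 x 0 = lam 0 := Function.update_of_ne (by decide) _ _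
      have h1 : Function.update lam 1 x 1 = x := Function.update_self _ _ _
      have h2 : Function.update lam 1 x 2 = lam 2 := Function.update_of_ne (by decide) _ _
      simp only [Fin.isValue, Fin.mk_one, Fin.sum_univ_three, h0, h1, h2]
      rw [show lam 0 * x * lam 2 = x * lam 0 * lam 2 from by ring]
      congr 1
      exact Finset.sum_congr rfl fun i _ => by ring
    rw [hfun]
    simp only [Fin.sum_univ_three, hlt]
    rw [show lam 1 * lam 0 * lam 2 = lam 0 * lam 1 * lam 2 from by ring] at key
    refine key.congr_deriv ?_
    congr 1
    congr 1
    exact Finset.sum_congr rfl fun i _ => by ring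
  · simp only [Fin.reduceFinMk, Fin.isValue]
    have key := ogden_helper μ α hα (lam 2) (lam 0) (lam 1) (hlam 2) (hlam 0) (hlam 1)
    have hfun : (fun x : ℝ => S (Function.update lam 2 x))
        = (fun x : ℝ => x ^ (-(2:ℝ)) * ∑ i, μ i *
          (((x * lam 0 * lam 1) ^ (-(1:ℝ)/3) * x) ^ α i -
            (1/3) * (((x * lam 0 * lam 1) ^ (-(1:ℝ)/3) * x) ^ α i
              + ((x * lam 0 * lam 1) ^ (-(1:ℝ)/3) * lam 0) ^ α i
              + ((x * lam 0 * lam 1) ^ (-(1:ℝ)/3) * lam 1) ^ α i))) := by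
      funext x
      rw [hS]
      have h0 : Function.update lam 2 x 0 = lam 0 := Function.update_of_ne (by decide) _ _
      have h1 : Function.update lam 2 x 1 = lam 1 := Function.update_of_ne (by decide) _ _
      have h2 : Function.update lam 2 x 2 = x := Function.update_self _ _ _
      simp only [Fin.isValue, Fin.reduceFinMk, Fin.sum_univ_three, h0, h1, h2]
      rw [show lam 0 * lam 1 * x = x * lam 0 * lam 1 from by ring]
      congr 1
      exact Finset.sum_congr rfl fun i _ => by ring
    rw [hfun]
    simp only [Fin.sum_univ_three, hlt]
    rw [show lam 2 * lam 0 * lam 1 = lam 0 * lam 1 * lam 2 from by ring] at key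
    refine key.congr_deriv ?_
    congr 1
    congr 1
    exact Finset.sum_congr rfl fun i _ => by ring
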